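/- For all n ≥ 2, the total number of vertical paths (paths from a vertex to one of its descendants, with distinct endpoints) with at least one edge, summed over all plane trees on n vertices, equals (1/2)·(4^(n-1) − binom(2n-2, n-1)). -/
import Mathlib


inductive PlaneTree : Type where
  | node : List PlaneTree → PlaneTree

namespace PlaneTree

mutual
def size : PlaneTree → ℕ
  | .node ts => 1 + sizeList ts
def sizeList : List PlaneTree → ℕ
  | [] => 0
  | t :: ts => size t + sizeList ts
end

mutual
def positions : PlaneTree → List (List ℕ)
  | .node ts => [] :: positionsList 0 ts
def positionsList : ℕ → List PlaneTree → List (List ℕ)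
  | _, [] => []
  | i, t :: ts => (positions t).map (i :: ·) ++ positionsList (i+1) ts
end

mutual
def leafPositions : PlaneTree → List (List ℕ)
  | .node [] => [[]]
  | .node (t :: ts) => leafList 0 (t :: ts)
def leafList : ℕ → List PlaneTree → List (List ℕ)
  | _, [] => []
  | i, t :: ts => (leafPositions t).map (i :: ·) ++ leafList (i+1) ts
end

def isPrefixB : List ℕ → List ℕ → Bool
  | [], _ => true
  | _ :: _, [] => false
  | a :: as, b :: bs => a == b && isPrefixB as bs

def lcpLen : List ℕ → List ℕ → ℕ
  | a :: as, b :: bs => if a = b then 1 + lcpLen as bs else 0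
  | _, _ => 0

/-- number of edges on the path between two vertices given by positions -/
def pathDist (p q : List ℕ) : ℕ :=
  (p.length - lcpLen p q) + (q.length - lcpLen p q)

/-- number of vertical paths (vertex, proper descendant) in a tree -/
def verticalPairs (T : PlaneTree) : ℕ :=
  ((positions T).map (fun q =>
    ((positions T).filter (fun p => p != q && isPrefixB p q)).length)).sum

/-- total number of edges over all vertical paths in a tree -/
def verticalEdges (T : PlaneTree) : ℕ :=
  ((positions T).map (fun q =>
    (((positions T).filter (fun p => p != q && isPrefixB p q)).map
      (fun p => q.length - p.length)).sum)).sum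

/-- number of (unordered) paths between distinct vertices -/
def pathCount (T : PlaneTree) : ℕ := ((positions T).sublistsLen 2).length

/-- Wiener index: sum of distances over unordered pairs of distinct vertices -/
def wiener (T : PlaneTree) : ℕ :=
  (((positions T).sublistsLen 2).map (fun l =>
    match l with
    | [p, q] => pathDist p q
    | _ => 0)).sum

/-! ### Auxiliary material -/

mutual
def beq : PlaneTree → PlaneTree → Bool
  | .node ts, .node us => beqList ts us
def beqList : List PlaneTree → List PlaneTree → Bool
  | [], [] => true
  | _ :: _, [] => false
  | [], _ :: _ => false
  | t :: ts, u :: us => beq t u && beqList ts us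
end

mutual
theorem beq_iff : ∀ t u : PlaneTree, beq t u = true ↔ t = u
  | .node ts, .node us => by rw [beq, beqList_iff]; simp
theorem beqList_iff : ∀ ts us : List PlaneTree, beqList ts us = true ↔ ts = us
  | [], [] => by simp [beqList]
  | _ :: _, [] => by simp [beqList]
  | [], _ :: _ => by simp [beqList]
  | t :: ts, u :: us => by rw [beqList, Bool.and_eq_true, beq_iff, beqList_iff]; simp
end

instance : DecidableEq PlaneTree := fun t u => decidable_of_iff _ (beq_iff t u)

mutual
theorem length_positions (t : PlaneTree) : (positions t).length = t.size := by
  cases t with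
  | node ts => simp [positions, size, length_positionsList]; omega
theorem length_positionsList (i : ℕ) (ts : List PlaneTree) :
    (positionsList i ts).length = sizeList ts := by
  cases ts with
  | nil => simp [positionsList, sizeList]
  | cons t ts =>
    simp [positionsList, sizeList, length_positions, length_positionsList]
end

def cntIn (l : List (List ℕ)) (q : List ℕ) : ℕ :=
  (l.filter (fun p => p != q && isPrefixB p q)).length

theorem verticalPairs_eq (t : PlaneTree) :
    verticalPairs t = ((positions t).map (cntIn (positions t))).sum := rfl

theorem cntIn_nil (l : List (List ℕ)) : cntIn l [] = 0 := by
  unfold cntIn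
  rw [List.filter_eq_nil_iff.mpr]
  · rfl
  · intro p hp
    cases p <;> simp [isPrefixB]

theorem positionsList_head (i : ℕ) (ts : List PlaneTree) :
    ∀ q ∈ positionsList i ts, ∃ a q', q = a :: q' ∧ i ≤ a := by
  induction ts generalizing i with
  | nil => simp [positionsList]
  | cons t ts ih =>
    intro q hq
    rw [positionsList, List.mem_append] at hq
    rcases hq with hq | hq
    · obtain ⟨q', _, rfl⟩ := List.mem_map.mp hq
      exact ⟨i, q', rfl, le_refl i⟩
    · obtain ⟨a, q', rfl, ha⟩ := ih (i+1) q hq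
      exact ⟨a, q', rfl, by omega⟩

theorem sum_map_add' {α : Type*} (l : List α) (f g : α → ℕ) :
    (l.map (fun x => f x + g x)).sum = (l.map f).sum + (l.map g).sum := by
  induction l with
  | nil => rfl
  | cons x l ih => simp [ih]; ring

theorem cntIn_first (j : ℕ) (P rest : List (List ℕ)) (q' : List ℕ)
    (hrest : ∀ q ∈ rest, ∃ a q'', q = a :: q'' ∧ j + 1 ≤ a) :
    cntIn ([] :: (P.map (j :: ·) ++ rest)) (j :: q') = 1 + cntIn P q' := by
  unfold cntIn
  rw [List.filter_cons, List.filter_append, List.filter_map]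
  have h2 : ((fun p => p != (j :: q') && isPrefixB p (j :: q')) ∘ (j :: ·))
      = fun p' => p' != q' && isPrefixB p' q' := by
    funext p'
    simp [Function.comp, isPrefixB, bne]
  have h3 : rest.filter (fun p => p != (j :: q') && isPrefixB p (j :: q')) = [] := by
    rw [List.filter_eq_nil_iff]
    intro p hp
    obtain ⟨a, q'', rfl, ha⟩ := hrest p hp
    have : (a == j) = false := by simp; omega
    simp [isPrefixB, this]
  rw [h2, h3]
  simp [isPrefixB, Nat.add_comm]

theorem cntIn_rest (j : ℕ) (P rest : List (List ℕ)) (a : ℕ) (q'' : List ℕ) (ha : j + 1 ≤ a) :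
    cntIn ([] :: (P.map (j :: ·) ++ rest)) (a :: q'') = cntIn ([] :: rest) (a :: q'') := by
  unfold cntIn
  rw [List.filter_cons, List.filter_cons, List.filter_append, List.filter_map]
  have h2 : P.filter ((fun p => p != (a :: q'') && isPrefixB p (a :: q'')) ∘ (j :: ·)) = [] := by
    rw [List.filter_eq_nil_iff]
    intro p hp
    have : (j == a) = false := by simp; omega
    simp [Function.comp, isPrefixB, this]
  rw [h2]
  simp

theorem sum_cnt (j : ℕ) (ts : List PlaneTree) :
    ((positionsList j ts).map (cntIn ([] :: positionsList j ts))).sum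
      = sizeList ts + (ts.map verticalPairs).sum := by
  induction ts generalizing j with
  | nil => simp [positionsList, sizeList]
  | cons t ts ih =>
    rw [positionsList]
    set P := positions t with hP
    set R := positionsList (j+1) ts with hR
    rw [List.map_append, List.sum_append, List.map_map]
    have hrest := positionsList_head (j+1) ts
    rw [← hR] at hrest
    have e1 : (P.map (cntIn ([] :: (P.map (j :: ·) ++ R)) ∘ (j :: ·)))
        = P.map (fun q' => 1 + cntIn P q') := by
      apply List.map_congr_left
      intro q' _
      exact cntIn_first j P R q' hrest
    have e2 : (R.map (cntIn ([] :: (P.map (j :: ·) ++ R))))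
        = R.map (cntIn ([] :: R)) := by
      apply List.map_congr_left
      intro q hq
      obtain ⟨a, q'', rfl, ha⟩ := hrest q hq
      exact cntIn_rest j P R a q'' ha
    rw [e1, e2, ih j.succ, sum_map_add' P (fun _ => 1) (fun q' => cntIn P q')]
    have : (P.map (fun _ => 1)).sum = t.size := by
      rw [← length_positions t, ← hP]
      simp [List.map_const]
    rw [this]
    have heta : P.map (fun q' => cntIn P q') = P.map (cntIn P) := rfl
    rw [heta]
    simp only [verticalPairs_eq, sizeList, List.map_cons, List.sum_cons, ← hP]
    omega

theorem verticalPairs_node (ts : List PlaneTree) :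
    verticalPairs (node ts) = sizeList ts + (ts.map verticalPairs).sum := by
  rw [verticalPairs_eq]
  show ((([] :: positionsList 0 ts)).map (cntIn ([] :: positionsList 0 ts))).sum = _
  rw [List.map_cons, List.sum_cons, cntIn_nil, sum_cnt]
  omega

/-! ### Finsets of forests -/

def forests : ℕ → Finset (List PlaneTree)
  | 0 => {[]}
  | (m+1) => (Finset.range (m+1)).attach.biUnion fun k =>
      (((forests k.1).image PlaneTree.node) ×ˢ forests (m - k.1)).image (fun p => p.1 :: p.2)
  decreasing_by
  · exact Nat.lt_succ_of_le (Nat.le_of_lt_succ (Finset.mem_range.mp k.2))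
  · exact Nat.lt_succ_of_le (Nat.sub_le m k.1)

theorem size_pos (t : PlaneTree) : 1 ≤ t.size := by
  cases t with | node ts => rw [size]; omega

theorem mem_forests : ∀ m : ℕ, ∀ ts : List PlaneTree, ts ∈ forests m ↔ sizeList ts = m := by
  intro m
  induction m using Nat.strong_induction_on with
  | _ m ih =>
  intro ts
  match m with
  | 0 =>
    rw [forests]
    constructor
    · intro h
      simp at h
      subst h; rfl
    · intro h
      cases ts with
      | nil => simp
      | cons t ts => exfalso; rw [sizeList] at h; have := size_pos t; omega
  | (m+1) =>
    rw [forests]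
    simp only [Finset.mem_biUnion, Finset.mem_attach, Finset.mem_image, Finset.mem_product,
      true_and, Subtype.exists, Finset.mem_range, Prod.exists]
    constructor
    · rintro ⟨k, hk, t, vs, ⟨⟨us, hus, rfl⟩, hvs⟩, rfl⟩
      rw [ih k hk] at hus
      rw [ih (m-k) (by omega) vs] at hvs
      rw [sizeList, size, hus, hvs]
      omega
    · intro h
      cases ts with
      | nil => exfalso; rw [sizeList] at h; omega
      | cons t vs =>
        cases t with
        | node us =>
          rw [sizeList, size] at h
          refine ⟨sizeList us, by omega, PlaneTree.node us, vs, ⟨⟨us, ?_, rfl⟩, ?_⟩, rfl⟩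
          · rw [ih (sizeList us) (by omega)]
          · rw [ih (m - sizeList us) (by omega)]; omega

theorem node_injective : Function.Injective PlaneTree.node := by
  intro a b h; injection h

theorem cons_injective2 :
    Function.Injective (fun p : PlaneTree × List PlaneTree => p.1 :: p.2) := by
  intro ⟨a, as⟩ ⟨b, bs⟩ h
  simp at h
  simp [h.1, h.2]

theorem parts_disjoint (m : ℕ) (a b : ℕ) (hab : a ≠ b) :
    Disjoint ((((forests a).image PlaneTree.node) ×ˢ forests (m - a)).image (fun p => p.1 :: p.2))
      ((((forests b).image PlaneTree.node) ×ˢ forests (m - b)).image (fun p => p.1 :: p.2)) := by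
  simp only [Finset.disjoint_left]
  intro ts hta htb
  apply hab
  simp only [Finset.mem_image, Finset.mem_product, Prod.exists] at hta htb
  obtain ⟨t, vs, ⟨⟨us, hus, rfl⟩, _⟩, rfl⟩ := hta
  obtain ⟨t', vs', ⟨⟨us', hus', ht'⟩, _⟩, heq⟩ := htb
  injection heq with h1 h2
  rw [← ht'] at h1
  injection h1 with h3
  rw [mem_forests] at hus hus'
  rw [← hus, ← hus', h3]

theorem card_forests : ∀ m : ℕ, (forests m).card = catalan m := by
  intro m
  induction m using Nat.strong_induction_on with
  | _ m ih =>
  match m with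
  | 0 => rw [forests]; simp
  | (m+1) =>
    rw [forests, Finset.card_biUnion]
    · have : ∀ k : {x // x ∈ Finset.range (m+1)},
          ((((forests k.1).image PlaneTree.node) ×ˢ forests (m - k.1)).image
            (fun p => p.1 :: p.2)).card = catalan k.1 * catalan (m - k.1) := by
        intro k
        rw [Finset.card_image_of_injective _ cons_injective2, Finset.card_product,
          Finset.card_image_of_injective _ node_injective,
          ih k.1 (Nat.lt_succ_of_le (Nat.le_of_lt_succ (Finset.mem_range.mp k.2))),
          ih (m - k.1) (Nat.lt_succ_of_le (Nat.sub_le m k.1))]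
      rw [Finset.sum_congr rfl (fun k _ => this k), Finset.sum_attach (Finset.range (m+1))
        (fun k => catalan k * catalan (m - k))]
      rw [catalan_succ m, ← Finset.sum_range (fun k => catalan k * catalan (m - k))]
    · intro a _ b _ hab
      exact parts_disjoint m a.1 b.1 (fun h => hab (Subtype.ext h))

/-! ### Rational identities -/

noncomputable def Cq (k : ℕ) : ℚ := catalan k
noncomputable def Bq (k : ℕ) : ℚ := Nat.centralBinom k

theorem Bq_eq (k : ℕ) : Bq k = (k + 1) * Cq k := by
  have := succ_mul_catalan_eq_centralBinom k
  unfold Bq Cq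
  exact_mod_cast this.symm

theorem sum_reflect (m : ℕ) (f : ℕ → ℕ → ℚ) :
    ∑ k ∈ Finset.range (m+1), f (m-k) k = ∑ k ∈ Finset.range (m+1), f k (m-k) := by
  rw [← Finset.sum_range_reflect (fun j => f j (m - j)) (m+1)]
  apply Finset.sum_congr rfl
  intro j hj
  rw [Finset.mem_range] at hj
  simp only [Nat.add_sub_cancel]
  rw [Nat.sub_sub_self (by omega : j ≤ m)]

theorem sum_CC (m : ℕ) : ∑ k ∈ Finset.range (m+1), Cq k * Cq (m-k) = Cq (m+1) := by
  have h := catalan_succ m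
  rw [← Finset.sum_range (fun k => catalan k * catalan (m - k))] at h
  unfold Cq
  rw [h]
  push_cast
  rfl

theorem sum_kCC (m : ℕ) :
    ∑ k ∈ Finset.range (m+1), (k : ℚ) * Cq k * Cq (m-k) = m * Cq (m+1) / 2 := by
  have hrefl := sum_reflect m (fun a b => (a : ℚ) * Cq a * Cq b)
  have h2 : (∑ k ∈ Finset.range (m+1), (k : ℚ) * Cq k * Cq (m-k)) * 2
      = ∑ k ∈ Finset.range (m+1),
          ((k : ℚ) * Cq k * Cq (m-k) + ((m-k : ℕ) : ℚ) * Cq (m-k) * Cq k) := by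
    rw [Finset.sum_add_distrib, ← hrefl]
    ring
  have h3 : ∑ k ∈ Finset.range (m+1),
        ((k : ℚ) * Cq k * Cq (m-k) + ((m-k : ℕ) : ℚ) * Cq (m-k) * Cq k)
      = ∑ k ∈ Finset.range (m+1), (m : ℚ) * (Cq k * Cq (m-k)) := by
    apply Finset.sum_congr rfl
    intro k hk
    rw [Finset.mem_range] at hk
    have : ((m-k : ℕ) : ℚ) = (m : ℚ) - k := by
      have : k ≤ m := by omega
      push_cast [this]; ring
    rw [this]; ring
  have h4 := sum_CC m
  rw [h3, ← Finset.mul_sum, h4] at h2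
  linarith

theorem sum_BC (m : ℕ) :
    ∑ k ∈ Finset.range (m+1), Bq k * Cq (m-k) = Bq (m+1) / 2 := by
  have h1 : ∑ k ∈ Finset.range (m+1), Bq k * Cq (m-k)
      = ∑ k ∈ Finset.range (m+1), ((k : ℚ) * Cq k * Cq (m-k) + Cq k * Cq (m-k)) := by
    apply Finset.sum_congr rfl
    intro k _
    rw [Bq_eq]; ring
  rw [h1, Finset.sum_add_distrib, sum_kCC, sum_CC, Bq_eq (m+1)]
  push_cast
  ring

theorem sum_4C (m : ℕ) :
    ∑ k ∈ Finset.range (m+1), (4:ℚ)^k * Cq (m-k) = (4^(m+1) - Bq (m+1)) / 2 := by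
  induction m with
  | zero => simp [Cq, Bq, Nat.centralBinom]; norm_num [Nat.choose]
  | succ m ih =>
    rw [Finset.sum_range_succ' (fun k => (4:ℚ)^k * Cq (m+1-k)) (m+1)]
    have e : ∑ k ∈ Finset.range (m+1), (4:ℚ)^(k+1) * Cq (m+1-(k+1))
        = 4 * ∑ k ∈ Finset.range (m+1), (4:ℚ)^k * Cq (m-k) := by
      rw [Finset.mul_sum]
      apply Finset.sum_congr rfl
      intro k _
      have : m + 1 - (k+1) = m - k := by omega
      rw [this]; ring
    rw [e, ih]
    have h := Nat.succ_mul_centralBinom_succ (m+1)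
    have hrec : ((m:ℚ) + 2) * Bq (m+1+1) = 2 * (2*(m:ℚ) + 3) * Bq (m+1) := by
      unfold Bq
      have h2 : (((m+1+1 : ℕ) : ℚ)) * (((m+1+1 : ℕ).centralBinom : ℚ))
          = 2 * (2 * ((m+1 : ℕ) : ℚ) + 1) * (((m+1 : ℕ).centralBinom : ℚ)) := by
        exact_mod_cast h
      push_cast at h2 ⊢
      linear_combination h2
    have hcat : Bq (m+1) = ((m:ℚ) + 2) * Cq (m+1) := by
      rw [Bq_eq]; push_cast; ring
    have hkey : Bq (m+1+1) = 4 * Bq (m+1) - 2 * Cq (m+1) := by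
      have hm2 : ((m:ℚ) + 2) ≠ 0 := by positivity
      apply mul_left_cancel₀ hm2
      linear_combination hrec - 2 * hcat
    simp only [pow_zero, one_mul, Nat.sub_zero]
    linear_combination (1/2) * hkey

/-! ### Sums over forests -/

noncomputable def Vsum (m : ℕ) : ℚ := ∑ ts ∈ forests m, ((ts.map verticalPairs).sum : ℚ)

theorem Vsum_zero : Vsum 0 = 0 := by
  unfold Vsum
  rw [forests]
  simp

theorem sum_forests_succ (m : ℕ) (f : List PlaneTree → ℚ) :
    ∑ ts ∈ forests (m+1), f ts
      = ∑ k ∈ Finset.range (m+1), ∑ us ∈ forests k, ∑ vs ∈ forests (m-k),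
          f (PlaneTree.node us :: vs) := by
  rw [forests, Finset.sum_biUnion (fun a _ b _ hab =>
    parts_disjoint m a.1 b.1 (fun h => hab (Subtype.ext h)))]
  have inner : ∀ k : ℕ,
      ∑ ts ∈ ((((forests k).image PlaneTree.node) ×ˢ forests (m-k)).image (fun p => p.1 :: p.2)),
          f ts
        = ∑ us ∈ forests k, ∑ vs ∈ forests (m-k), f (PlaneTree.node us :: vs) := by
    intro k
    rw [Finset.sum_image (fun x _ y _ h => cons_injective2 h), Finset.sum_product,
      Finset.sum_image (fun x _ y _ h => node_injective h)]
  rw [Finset.sum_congr rfl (fun k _ => inner k.1), Finset.sum_attach (Finset.range (m+1))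
    (fun k => ∑ us ∈ forests k, ∑ vs ∈ forests (m-k), f (PlaneTree.node us :: vs))]

theorem Vsum_succ (m : ℕ) : Vsum (m+1) = ∑ k ∈ Finset.range (m+1),
    (((k:ℚ) * Cq k + Vsum k) * Cq (m-k) + Cq k * Vsum (m-k)) := by
  unfold Vsum
  rw [sum_forests_succ m (fun ts => ((ts.map verticalPairs).sum : ℚ))]
  apply Finset.sum_congr rfl
  intro k hk
  have e1 : ∀ us ∈ forests k, ∀ vs ∈ forests (m-k),
      ((((PlaneTree.node us :: vs).map verticalPairs).sum : ℕ) : ℚ)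
        = ((k:ℚ) + ((us.map verticalPairs).sum : ℚ)) + ((vs.map verticalPairs).sum : ℚ) := by
    intro us hus vs hvs
    rw [List.map_cons, List.sum_cons, verticalPairs_node, (mem_forests k us).mp hus]
    push_cast
    ring
  rw [Finset.sum_congr rfl (fun us hus => Finset.sum_congr rfl (fun vs hvs => e1 us hus vs hvs))]
  rw [Finset.sum_congr rfl (fun us _ => by
    rw [Finset.sum_add_distrib, Finset.sum_const, nsmul_eq_mul])]
  rw [Finset.sum_add_distrib, ← Finset.mul_sum, Finset.sum_add_distrib, Finset.sum_const,
    nsmul_eq_mul, Finset.sum_const, nsmul_eq_mul]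
  rw [card_forests, card_forests]
  have hk1 : ∑ ts ∈ forests k, ((ts.map verticalPairs).sum : ℚ) = Vsum k := rfl
  have hk2 : ∑ ts ∈ forests (m-k), ((ts.map verticalPairs).sum : ℚ) = Vsum (m-k) := rfl
  rw [hk1, hk2]
  unfold Cq
  ring

theorem Vsum_closed : ∀ m : ℕ, Vsum m = (4^m - Bq m)/2 - m * Cq m := by
  intro m
  induction m using Nat.strong_induction_on with
  | _ m ih =>
  match m with
  | 0 =>
    rw [Vsum_zero]
    have : Bq 0 = 1 := by unfold Bq; norm_num [Nat.centralBinom]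
    rw [this]; norm_num
  | (m+1) =>
    rw [Vsum_succ m]
    have step : ∀ k ∈ Finset.range (m+1),
        ((k:ℚ) * Cq k + Vsum k) * Cq (m-k) + Cq k * Vsum (m-k)
        = (1/2) * ((4:ℚ)^k * Cq (m-k)) - (1/2) * (Bq k * Cq (m-k))
          + (1/2) * (Cq k * 4^(m-k)) - (1/2) * (Cq k * Bq (m-k))
          - (m:ℚ) * (Cq k * Cq (m-k)) + ((k:ℚ) * Cq k * Cq (m-k)) := by
      intro k hk
      rw [Finset.mem_range] at hk
      rw [ih k (by omega), ih (m-k) (by omega)]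
      have : ((m-k : ℕ) : ℚ) = (m:ℚ) - k := by
        have : k ≤ m := by omega
        push_cast [this]; ring
      rw [this]; ring
    rw [Finset.sum_congr rfl step]
    simp only [Finset.sum_add_distrib, Finset.sum_sub_distrib, ← Finset.mul_sum]
    have h3 : ∑ k ∈ Finset.range (m+1), Cq k * (4:ℚ)^(m-k)
        = ∑ k ∈ Finset.range (m+1), (4:ℚ)^k * Cq (m-k) :=
      calc ∑ k ∈ Finset.range (m+1), Cq k * (4:ℚ)^(m-k)
          = ∑ k ∈ Finset.range (m+1), (4:ℚ)^(m-k) * Cq k :=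
            Finset.sum_congr rfl (fun k _ => by ring)
        _ = ∑ k ∈ Finset.range (m+1), (4:ℚ)^k * Cq (m-k) :=
            sum_reflect m (fun a b => (4:ℚ)^a * Cq b)
    have h4 : ∑ k ∈ Finset.range (m+1), Cq k * Bq (m-k)
        = ∑ k ∈ Finset.range (m+1), Bq k * Cq (m-k) :=
      calc ∑ k ∈ Finset.range (m+1), Cq k * Bq (m-k)
          = ∑ k ∈ Finset.range (m+1), Bq (m-k) * Cq k :=
            Finset.sum_congr rfl (fun k _ => by ring)
        _ = ∑ k ∈ Finset.range (m+1), Bq k * Cq (m-k) :=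
            sum_reflect m (fun a b => Bq a * Cq b)
    rw [h3, h4, sum_4C m, sum_BC m, sum_CC m, sum_kCC m]
    have hB : Bq (m+1) = ((m:ℚ) + 2) * Cq (m+1) := by
      rw [Bq_eq]; push_cast; ring
    push_cast
    linear_combination (-1/2 : ℚ) * hB

end PlaneTree

theorem total_vertical_paths_plane_trees (n : ℕ) (hn : 2 ≤ n) :
    (∑ᶠ T : {T : PlaneTree // T.size = n}, (T.1.verticalPairs : ℚ))
      = (1 / 2) * (4 ^ (n - 1) - ((2 * n - 2).choose (n - 1) : ℚ)) := by
  obtain ⟨m, rfl⟩ : ∃ m, n = m + 1 := ⟨n-1, by omega⟩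
  have hset : {T : PlaneTree | T.size = m+1} = ↑((PlaneTree.forests m).image PlaneTree.node) := by
    ext T
    cases T with
    | node ts =>
      simp only [Set.mem_setOf_eq, Finset.coe_image, Set.mem_image, Finset.mem_coe]
      constructor
      · intro h
        rw [PlaneTree.size] at h
        exact ⟨ts, (PlaneTree.mem_forests m ts).mpr (by omega), rfl⟩
      · rintro ⟨us, hus, h⟩
        injection h with h'
        subst h'
        rw [PlaneTree.size, (PlaneTree.mem_forests m us).mp hus]
        omega
  have h1 : (∑ᶠ T : {T : PlaneTree // T.size = m+1}, (T.1.verticalPairs : ℚ))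
      = ∑ᶠ T ∈ {T : PlaneTree | T.size = m+1}, ((T.verticalPairs : ℚ)) := by
    exact finsum_set_coe_eq_finsum_mem
      (f := fun T : PlaneTree => (T.verticalPairs : ℚ)) {T : PlaneTree | T.size = m+1}
  rw [h1, hset, finsum_mem_coe_finset,
    Finset.sum_image (fun x _ y _ h => PlaneTree.node_injective h)]
  have e1 : ∀ us ∈ PlaneTree.forests m, ((PlaneTree.verticalPairs (PlaneTree.node us) : ℕ) : ℚ)
      = (m : ℚ) + ((us.map PlaneTree.verticalPairs).sum : ℚ) := by
    intro us hus
    rw [PlaneTree.verticalPairs_node, (PlaneTree.mem_forests m us).mp hus]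
    push_cast
    ring
  rw [Finset.sum_congr rfl e1, Finset.sum_add_distrib, Finset.sum_const, nsmul_eq_mul,
    PlaneTree.card_forests]
  have h2 : (∑ us ∈ PlaneTree.forests m, ((us.map PlaneTree.verticalPairs).sum : ℚ)) = PlaneTree.Vsum m := rfl
  rw [h2, PlaneTree.Vsum_closed m]
  have h5 : (2 * (m+1) - 2 : ℕ) = 2 * m := by omega
  have h6 : (m + 1 - 1 : ℕ) = m := by omega
  rw [h5, h6]
  have h7 : ((2 * m).choose m : ℚ) = PlaneTree.Bq m := by unfold PlaneTree.Bq Nat.centralBinom; norm_num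
  rw [h7]
  unfold PlaneTree.Cq
  ring
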